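/- arXiv:1810.10790 — 4 statements merged into one kernel-verified Lean document; each statement's English description precedes it below -/
import Mathlib

section
/- Let k be a commutative ring, λ ∈ k, and let Δ : k[x] → k[x] ⊗ k[x] be the k-linear map determined on the monomial basis by Δ(1) = −λ(1 ⊗ 1) and Δ(x^n) = Σ_{i=0}^{n−1} x^i ⊗ x^{n−1−i} + λ Σ_{i=1}^{n−1} x^i ⊗ x^{n−i} for n ≥ 1. Then Δ(pq) = p·Δ(q) + Δ(p)·q + λ(p ⊗ q) for all p, q ∈ k[x]. -/
open TensorProduct Polynomial

/-!
In `k[x] ⊗ k[x]` put `u = x ⊗ 1` and `v = 1 ⊗ x`; then `p·t = (p ⊗ 1) t` and `t·q = t (1 ⊗ q)`.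
Both sides of the identity are bilinear in `(p, q)`, so it suffices to take `p = x^m`, `q = x^n`.
With `G n = Σ_{i<n} u^i v^(n-1-i)`, the defining formulas combine into the single closed form
`Δ(x^n) = (1 + λv) G n - λ v^n`, valid also for `n = 0`, and `G (n+1) = u G n + v^n` turns it into
the case `m = 1`: `Δ(x^(n+1)) = u Δ(x^n) + v^n + λ u v^n`. Induction on `m` gives the general case.
-/

theorem LinearMap.rTensor_mulLeft_apply {R A B : Type*} [CommSemiring R] [Semiring A] [Semiring B]
    [Algebra R A] [Algebra R B] (a : A) (t : A ⊗[R] B) :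
    LinearMap.rTensor B (LinearMap.mulLeft R a) t = (a ⊗ₜ 1) * t := by
  rw [← LinearMap.mulLeft_apply (R := R), LinearMap.mulLeft_tmul, LinearMap.mulLeft_one]
  rfl

theorem LinearMap.lTensor_mulRight_apply {R A B : Type*} [CommSemiring R] [Semiring A] [Semiring B]
    [Algebra R A] [Algebra R B] (b : B) (t : A ⊗[R] B) :
    LinearMap.lTensor A (LinearMap.mulRight R b) t = t * (1 ⊗ₜ b) := by
  rw [← LinearMap.mulRight_apply (R := R), LinearMap.mulRight_tmul, LinearMap.mulRight_one]
  rfl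

theorem TensorProduct.pow_tmul_pow {R A B : Type*} [CommSemiring R] [Semiring A] [Semiring B]
    [Algebra R A] [Algebra R B] (a : A) (b : B) (i j : ℕ) :
    (a ^ i) ⊗ₜ[R] (b ^ j) = (a ⊗ₜ 1) ^ i * (1 ⊗ₜ b) ^ j := by
  rw [Algebra.TensorProduct.tmul_pow, Algebra.TensorProduct.tmul_pow,
    Algebra.TensorProduct.tmul_mul_tmul, one_pow, one_pow, mul_one, one_mul]

theorem map_mul_eq_weightedLeibniz_of_basis {R A ι : Type*} [CommSemiring R] [Semiring A]
    [Algebra R A] (b : Module.Basis ι R A) (lam : R) (Δ : A →ₗ[R] A ⊗[R] A)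
    (h : ∀ i j, Δ (b i * b j) =
      (b i ⊗ₜ 1) * Δ (b j) + Δ (b i) * (1 ⊗ₜ b j) + lam • (b i ⊗ₜ b j))
    (p q : A) :
    Δ (p * q) = (p ⊗ₜ 1) * Δ q + Δ p * (1 ⊗ₜ q) + lam • (p ⊗ₜ q) := by
  have := LinearMap.ext_basis b b (B := (LinearMap.mul R A).compr₂ Δ)
    (B' := (LinearMap.mul R (A ⊗[R] A)).compl₁₂
        Algebra.TensorProduct.includeLeft.toLinearMap Δ +
      (LinearMap.mul R (A ⊗[R] A)).compl₁₂ Δ Algebra.TensorProduct.includeRight.toLinearMap +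
      lam • TensorProduct.mk R A A) (by simpa using h)
  simpa using congr($this p q)

section WeightedLeibniz

variable {A : Type*} [CommRing A]

theorem weightedLeibniz_pow_of_succ (u v c : A) (D : ℕ → A) (h0 : D 0 = -c)
    (hsucc : ∀ n, D (n + 1) = u * D n + v ^ n + c * u * v ^ n) (m n : ℕ) :
    D (m + n) = u ^ m * D n + D m * v ^ n + c * u ^ m * v ^ n := by
  induction m with
  | zero => rw [zero_add, h0]; ring
  | succ m ih => rw [Nat.add_right_comm, hsucc, hsucc, ih, pow_add]; ring

theorem geom_sum₂_succ_eq_mul_add (u v : A) (n : ℕ) :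
    ∑ i ∈ Finset.range (n + 1), u ^ i * v ^ (n + 1 - 1 - i) =
      u * ∑ i ∈ Finset.range n, u ^ i * v ^ (n - 1 - i) + v ^ n := by
  rw [geom_sum₂_comm, Nat.add_sub_cancel, geom_sum₂_succ_eq, geom_sum₂_comm, add_comm]

theorem sum_Ico_one_pow_mul_pow (u v : A) {n : ℕ} (hn : 0 < n) :
    ∑ i ∈ Finset.Ico 1 n, u ^ i * v ^ (n - i) =
      v * ∑ i ∈ Finset.range n, u ^ i * v ^ (n - 1 - i) - v ^ n := by
  have : v * ∑ i ∈ Finset.range n, u ^ i * v ^ (n - 1 - i) =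
      ∑ i ∈ Finset.range n, u ^ i * v ^ (n - i) := by
    rw [Finset.mul_sum]
    refine Finset.sum_congr rfl fun i hi => ?_
    rw [Finset.mem_range] at hi
    rw [mul_left_comm, ← pow_succ', show n - 1 - i + 1 = n - i by omega]
  rw [this, Finset.sum_range_eq_add_Ico _ hn, pow_zero, one_mul, Nat.sub_zero]
  ring

end WeightedLeibniz

/-- The linear map `Δ` on `k[x]` determined on the monomial basis by
`Δ(1) = -λ (1 ⊗ 1)` and `Δ(x^n) = Σ_{i=0}^{n-1} x^i ⊗ x^{n-1-i} + λ Σ_{i=1}^{n-1} x^i ⊗ x^{n-i}`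
satisfies `Δ(pq) = p·Δ(q) + Δ(p)·q + λ (p ⊗ q)`. -/
theorem infinitesimal_coproduct_on_polynomials_is_weighted_derivation
    {k : Type*} [CommRing k] (lam : k)
    (Δ : Polynomial k →ₗ[k] Polynomial k ⊗[k] Polynomial k)
    (h1 : Δ 1 = -(lam • ((1 : Polynomial k) ⊗ₜ[k] (1 : Polynomial k))))
    (hX : ∀ n : ℕ, 1 ≤ n →
      Δ (X ^ n) =
        (∑ i ∈ Finset.range n,
          ((X : Polynomial k) ^ i) ⊗ₜ[k] ((X : Polynomial k) ^ (n - 1 - i))) +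
        lam • ∑ i ∈ Finset.Ico 1 n,
          ((X : Polynomial k) ^ i) ⊗ₜ[k] ((X : Polynomial k) ^ (n - i))) :
    ∀ p q : Polynomial k,
      Δ (p * q) =
        LinearMap.rTensor (Polynomial k) (LinearMap.mulLeft k p) (Δ q) +
        LinearMap.lTensor (Polynomial k) (LinearMap.mulRight k q) (Δ p) +
        lam • (p ⊗ₜ[k] q) := by
  set u : k[X] ⊗[k] k[X] := X ⊗ₜ 1 with hu
  set v : k[X] ⊗[k] k[X] := 1 ⊗ₜ X with hv
  set c := algebraMap k (k[X] ⊗[k] k[X]) lam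
  have hsmul : ∀ t : k[X] ⊗[k] k[X], lam • t = c * t := fun t => Algebra.smul_def lam t
  have h0 : Δ (X ^ 0) = -c := by
    rw [pow_zero, h1, ← Algebra.TensorProduct.one_def, hsmul, mul_one]
  have hΔ : ∀ n, Δ (X ^ n) =
      (1 + c * v) * ∑ i ∈ Finset.range n, u ^ i * v ^ (n - 1 - i) - c * v ^ n := by
    intro n
    cases n with
    | zero => rw [h0]; simp
    | succ n =>
      rw [hX (n + 1) (by omega), hsmul]
      simp only [TensorProduct.pow_tmul_pow, ← hu, ← hv]
      rw [sum_Ico_one_pow_mul_pow u v (by omega : 0 < n + 1)]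
      ring
  have hmonomial (m n : ℕ) :
      Δ (X ^ (m + n)) = u ^ m * Δ (X ^ n) + Δ (X ^ m) * v ^ n + c * u ^ m * v ^ n := by
    refine weightedLeibniz_pow_of_succ u v c (fun n => Δ (X ^ n)) h0 (fun n => ?_) m n
    rw [hΔ, hΔ, geom_sum₂_succ_eq_mul_add]
    ring
  intro p q
  rw [LinearMap.rTensor_mulLeft_apply, LinearMap.lTensor_mulRight_apply]
  refine map_mul_eq_weightedLeibniz_of_basis (basisMonomials k) lam Δ (fun m n => ?_) p q
  simpa only [coe_basisMonomials, ← X_pow_eq_monomial, ← pow_add, hu, hv,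
    Algebra.TensorProduct.tmul_pow, one_pow, hsmul, mul_assoc,
    Algebra.TensorProduct.tmul_mul_tmul, mul_one, one_mul] using hmonomial m n
end

section
/- Let k be a commutative ring, λ ∈ k, and let Δ : k[x] → k[x] ⊗ k[x] be the k-linear map determined on the monomial basis by Δ(1) = −λ(1 ⊗ 1) and Δ(x^n) = Σ_{i=0}^{n−1} x^i ⊗ x^{n−1−i} + λ Σ_{i=1}^{n−1} x^i ⊗ x^{n−i} for n ≥ 1. Then Δ is coassociative: (Δ ⊗ id) ∘ Δ = (id ⊗ Δ) ∘ Δ. Consequently (k[x], multiplication, 1, Δ) is an infinitesimal unitary bialgebra of weight λ. -/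
/-!
Multiplication by `X` on the left governs everything: the formula for `Δ (X ^ n)` is equivalent
to `Δ 1 = -λ (1 ⊗ 1)` together with `Δ (X * p) = X · Δ p + 1 ⊗ p + λ (X ⊗ p)`. Since `1` and
left multiplication by `X` generate `k[X]` as a `k`-module, both coassociativity and the weighted
Leibniz rule reduce to checking them at `1` and propagating them from `p` to `X * p`; the
propagation works in any algebra `A` with an element `x` satisfying these two identities.
-/

open TensorProduct Polynomial

theorem LinearMap.lTensor_rTensor_comm_apply {R M N P Q : Type*} [CommSemiring R]
    [AddCommMonoid M] [AddCommMonoid N] [AddCommMonoid P] [AddCommMonoid Q]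
    [Module R M] [Module R N] [Module R P] [Module R Q]
    (f : M →ₗ[R] N) (g : P →ₗ[R] Q) (t : M ⊗[R] P) :
    g.lTensor N (f.rTensor P t) = f.rTensor Q (g.lTensor M t) := by
  rw [← comp_apply, lTensor_comp_rTensor, ← rTensor_comp_lTensor]
  rfl

@[elab_as_elim]
theorem Polynomial.induction_on_X_mul {R : Type*} [Semiring R] {motive : R[X] → Prop}
    (p : R[X]) (one : motive 1) (add : ∀ p q, motive p → motive q → motive (p + q))
    (smul : ∀ (a : R) p, motive p → motive (a • p)) (X_mul : ∀ p, motive p → motive (X * p)) :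
    motive p := by
  induction p using Polynomial.induction_on' with
  | add p q hp hq => exact add p q hp hq
  | monomial n a =>
    rw [← smul_X_eq_monomial]
    refine smul a _ ?_
    induction n with
    | zero => simpa using one
    | succ n ih => simpa [pow_succ'] using X_mul _ ih

section Weighted

variable {k A : Type*} [CommRing k] [Ring A] [Algebra k A]

def IsCoassocAt (Δ : A →ₗ[k] A ⊗[k] A) (a : A) : Prop :=
  TensorProduct.assoc k A A A (Δ.rTensor A (Δ a)) = Δ.lTensor A (Δ a)

def IsWeightedLeibnizAt (lam : k) (Δ : A →ₗ[k] A ⊗[k] A) (a : A) : Prop :=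
  ∀ b : A, Δ (a * b) =
    (LinearMap.mulLeft k a).rTensor A (Δ b) + (LinearMap.mulRight k b).lTensor A (Δ a) +
      lam • (a ⊗ₜ[k] b)

variable {lam : k} {Δ : A →ₗ[k] A ⊗[k] A} {x : A}

theorem IsCoassocAt.add {a b : A} (ha : IsCoassocAt Δ a) (hb : IsCoassocAt Δ b) :
    IsCoassocAt Δ (a + b) := by
  unfold IsCoassocAt at *
  simp only [map_add, ha, hb]

theorem IsCoassocAt.smul {a : A} (c : k) (ha : IsCoassocAt Δ a) : IsCoassocAt Δ (c • a) := by
  unfold IsCoassocAt at *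
  simp only [map_smul, ha]

theorem isCoassocAt_one (hone : Δ 1 = -(lam • (1 : A) ⊗ₜ[k] (1 : A))) : IsCoassocAt Δ 1 := by
  simp only [IsCoassocAt, hone, map_neg, map_smul, LinearMap.rTensor_tmul, LinearMap.lTensor_tmul,
    neg_tmul, tmul_neg, ← smul_tmul', tmul_smul, assoc_tmul]

theorem IsWeightedLeibnizAt.add {a a' : A} (ha : IsWeightedLeibnizAt lam Δ a)
    (ha' : IsWeightedLeibnizAt lam Δ a') : IsWeightedLeibnizAt lam Δ (a + a') := by
  intro b
  have hmulLeft : LinearMap.mulLeft k (a + a') = LinearMap.mulLeft k a + LinearMap.mulLeft k a' :=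
    map_add (LinearMap.mul k A) a a'
  simp only [add_mul, map_add, ha b, ha' b, hmulLeft, LinearMap.rTensor_add, LinearMap.add_apply,
    add_tmul, smul_add]
  abel

theorem IsWeightedLeibnizAt.smul {a : A} (c : k) (ha : IsWeightedLeibnizAt lam Δ a) :
    IsWeightedLeibnizAt lam Δ (c • a) := by
  intro b
  have hmulLeft : LinearMap.mulLeft k (c • a) = c • LinearMap.mulLeft k a :=
    map_smul (LinearMap.mul k A) c a
  simp only [smul_mul_assoc, map_smul, ha b, hmulLeft, LinearMap.rTensor_smul,
    LinearMap.smul_apply, smul_add, ← smul_tmul', smul_comm lam c]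

theorem isWeightedLeibnizAt_one (hone : Δ 1 = -(lam • (1 : A) ⊗ₜ[k] (1 : A))) :
    IsWeightedLeibnizAt lam Δ 1 := by
  intro b
  simp [hone, LinearMap.mulLeft_one, smul_tmul']

section MulLeft

variable (hmul : ∀ a : A, Δ (x * a) =
    (LinearMap.mulLeft k x).rTensor A (Δ a) + (1 : A) ⊗ₜ[k] a + lam • (x ⊗ₜ[k] a))
include hmul

theorem map_eq_one_tmul_one (hone : Δ 1 = -(lam • (1 : A) ⊗ₜ[k] (1 : A))) :
    Δ x = (1 : A) ⊗ₜ[k] (1 : A) := by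
  simpa [hone, smul_tmul'] using hmul 1

theorem assoc_rTensor_rTensor_mulLeft (t : A ⊗[k] A) :
    TensorProduct.assoc k A A A (Δ.rTensor A ((LinearMap.mulLeft k x).rTensor A t)) =
      (LinearMap.mulLeft k x).rTensor (A ⊗[k] A) (TensorProduct.assoc k A A A (Δ.rTensor A t)) +
        (1 : A) ⊗ₜ[k] t + lam • (x ⊗ₜ[k] t) := by
  induction t with
  | zero => simp
  | add t u ht hu => simp only [map_add, ht, hu, tmul_add, smul_add]; abel
  | tmul a b =>
    simp only [LinearMap.rTensor_tmul, LinearMap.mulLeft_apply, hmul, add_tmul, map_add,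
      ← smul_tmul', map_smul, assoc_tmul]
    rw [LinearMap.rTensor_tensor]
    simp

theorem IsCoassocAt.mul_left (hone : Δ 1 = -(lam • (1 : A) ⊗ₜ[k] (1 : A))) {a : A}
    (ha : IsCoassocAt Δ a) : IsCoassocAt Δ (x * a) := by
  unfold IsCoassocAt at *
  have hcancel : TensorProduct.assoc k A A A (Δ 1 ⊗ₜ a) +
      lam • TensorProduct.assoc k A A A (Δ x ⊗ₜ a) = 0 := by
    rw [← map_smul, ← map_add, smul_tmul', ← add_tmul, hone, map_eq_one_tmul_one hmul hone,
      neg_add_cancel, zero_tmul, map_zero]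
  rw [hmul]
  simp only [map_add, map_smul, LinearMap.rTensor_tmul, LinearMap.lTensor_tmul,
    assoc_rTensor_rTensor_mulLeft hmul, LinearMap.lTensor_rTensor_comm_apply, ha]
  rw [add_assoc _ (TensorProduct.assoc k A A A _), hcancel, add_zero]

theorem IsWeightedLeibnizAt.mul_left {a : A} (ha : IsWeightedLeibnizAt lam Δ a) :
    IsWeightedLeibnizAt lam Δ (x * a) := by
  intro b
  rw [mul_assoc, hmul, ha, hmul]
  simp only [map_add, map_smul, LinearMap.rTensor_tmul, LinearMap.lTensor_tmul,
    LinearMap.mulLeft_mul, LinearMap.rTensor_comp, LinearMap.comp_apply,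
    LinearMap.lTensor_rTensor_comm_apply, LinearMap.mulLeft_apply, LinearMap.mulRight_apply]
  abel

end MulLeft

end Weighted

section Polynomial

variable {k : Type*} [CommRing k] {lam : k} {Δ : k[X] →ₗ[k] k[X] ⊗[k] k[X]}

variable (h1 : Δ 1 = -(lam • ((1 : Polynomial k) ⊗ₜ[k] (1 : Polynomial k))))
    (hX : ∀ n : ℕ, 1 ≤ n →
      Δ (X ^ n) =
        (∑ i ∈ Finset.range n,
          ((X : Polynomial k) ^ i) ⊗ₜ[k] ((X : Polynomial k) ^ (n - 1 - i))) +
        lam • ∑ i ∈ Finset.Ico 1 n,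
          ((X : Polynomial k) ^ i) ⊗ₜ[k] ((X : Polynomial k) ^ (n - i)))
include h1 hX

theorem map_X_mul_X_pow (n : ℕ) :
    Δ (X * X ^ n) = (LinearMap.mulLeft k X).rTensor k[X] (Δ (X ^ n)) +
      (1 : k[X]) ⊗ₜ[k] (X ^ n) + lam • ((X : k[X]) ⊗ₜ[k] (X ^ n)) := by
  rcases n with _ | m
  · have hX1 := hX 1 le_rfl
    simp only [pow_one, Finset.range_one, Finset.sum_singleton, Finset.Ico_self, Finset.sum_empty,
      smul_zero, add_zero, Nat.sub_self, pow_zero] at hX1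
    simp only [pow_zero, mul_one, hX1, h1, map_neg, map_smul, LinearMap.rTensor_tmul,
      LinearMap.mulLeft_apply]
    abel
  have hS : ∑ i ∈ Finset.range (m + 2), ((X : k[X]) ^ i) ⊗ₜ[k] ((X : k[X]) ^ (m + 2 - 1 - i)) =
      (1 : k[X]) ⊗ₜ[k] (X ^ (m + 1)) + (LinearMap.mulLeft k X).rTensor k[X]
        (∑ i ∈ Finset.range (m + 1), ((X : k[X]) ^ i) ⊗ₜ[k] ((X : k[X]) ^ (m + 1 - 1 - i))) := by
    rw [Finset.sum_range_succ', add_comm, map_sum]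
    congr 1
    refine Finset.sum_congr rfl fun i _ => ?_
    rw [LinearMap.rTensor_tmul, LinearMap.mulLeft_apply, ← pow_succ']
    congr 2
    omega
  have hT : ∑ i ∈ Finset.Ico 1 (m + 2), ((X : k[X]) ^ i) ⊗ₜ[k] ((X : k[X]) ^ (m + 2 - i)) =
      (X : k[X]) ⊗ₜ[k] (X ^ (m + 1)) + (LinearMap.mulLeft k X).rTensor k[X]
        (∑ i ∈ Finset.Ico 1 (m + 1), ((X : k[X]) ^ i) ⊗ₜ[k] ((X : k[X]) ^ (m + 1 - i))) := by
    rw [Finset.sum_eq_sum_Ico_succ_bot (by omega), pow_one, ← Finset.sum_Ico_add', map_sum]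
    congr 1
    refine Finset.sum_congr rfl fun i _ => ?_
    rw [LinearMap.rTensor_tmul, LinearMap.mulLeft_apply, ← pow_succ']
    congr 2
    omega
  rw [← pow_succ', hX (m + 2) (by omega), hX (m + 1) (by omega), hS, hT]
  simp only [map_add, map_smul, smul_add]
  abel

theorem map_X_mul (p : k[X]) :
    Δ (X * p) = (LinearMap.mulLeft k X).rTensor k[X] (Δ p) + (1 : k[X]) ⊗ₜ[k] p +
      lam • ((X : k[X]) ⊗ₜ[k] p) := by
  induction p using Polynomial.induction_on' with
  | add p q hp hq =>
    simp only [mul_add, map_add, hp, hq, tmul_add, smul_add]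
    abel
  | monomial n a =>
    rw [← smul_X_eq_monomial, mul_smul_comm, map_smul, map_smul, map_X_mul_X_pow h1 hX]
    simp only [smul_add, map_smul, tmul_smul, smul_comm lam a]

end Polynomial

/-- The linear map `Δ` on `k[x]` determined on the monomial basis by
`Δ(1) = -λ (1 ⊗ 1)` and `Δ(x^n) = Σ_{i=0}^{n-1} x^i ⊗ x^{n-1-i} + λ Σ_{i=1}^{n-1} x^i ⊗ x^{n-i}`
is coassociative; consequently `(k[x], ·, 1, Δ)` is an infinitesimal unitary bialgebra of
weight `λ`. -/
theorem infinitesimal_coproduct_on_polynomials_coassoc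
    {k : Type*} [CommRing k] (lam : k)
    (Δ : Polynomial k →ₗ[k] Polynomial k ⊗[k] Polynomial k)
    (h1 : Δ 1 = -(lam • ((1 : Polynomial k) ⊗ₜ[k] (1 : Polynomial k))))
    (hX : ∀ n : ℕ, 1 ≤ n →
      Δ (X ^ n) =
        (∑ i ∈ Finset.range n,
          ((X : Polynomial k) ^ i) ⊗ₜ[k] ((X : Polynomial k) ^ (n - 1 - i))) +
        lam • ∑ i ∈ Finset.Ico 1 n,
          ((X : Polynomial k) ^ i) ⊗ₜ[k] ((X : Polynomial k) ^ (n - i))) :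
    (∀ p : Polynomial k,
      (TensorProduct.assoc k (Polynomial k) (Polynomial k) (Polynomial k))
          (LinearMap.rTensor (Polynomial k) Δ (Δ p)) =
        LinearMap.lTensor (Polynomial k) Δ (Δ p)) ∧
    (∀ p q : Polynomial k,
      Δ (p * q) =
        LinearMap.rTensor (Polynomial k) (LinearMap.mulLeft k p) (Δ q) +
        LinearMap.lTensor (Polynomial k) (LinearMap.mulRight k q) (Δ p) +
        lam • (p ⊗ₜ[k] q)) := by
  have hmul := map_X_mul h1 hX
  refine ⟨fun p => ?_, fun p => ?_⟩
  · show IsCoassocAt Δ p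
    induction p using Polynomial.induction_on_X_mul with
    | one => exact isCoassocAt_one h1
    | add p q hp hq => exact hp.add hq
    | smul a p hp => exact hp.smul a
    | X_mul p hp => exact hp.mul_left hmul h1
  · show IsWeightedLeibnizAt lam Δ p
    induction p using Polynomial.induction_on_X_mul with
    | one => exact isWeightedLeibnizAt_one h1
    | add p q hp hq => exact hp.add hq
    | smul a p hp => exact hp.smul a
    | X_mul p hp => exact hp.mul_left hmul
end

section
/- Let (A, m, 1, Δ_A) be an infinitesimal unitary bialgebra of weight λ, and equip A ⊗ A with the coproduct Δ defined by Δ(a ⊗ b) = Σ_{(a)} (a_(1) ⊗ 1) ⊗ (a_(2) ⊗ b) + Σ_{(b)} (a ⊗ b_(1)) ⊗ (1 ⊗ b_(2)) + λ (a ⊗ 1) ⊗ (1 ⊗ b), where Δ_A(a) = Σ_{(a)} a_(1) ⊗ a_(2). Then the multiplication map m : A ⊗ A → A is a morphism of coalgebras, i.e. Δ_A ∘ m = (m ⊗ m) ∘ Δ. -/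
/-!
On `a ⊗ b`, applying `m ⊗ m` to `Δ(a ⊗ b)` absorbs the inserted units: the three summands become
`Σ a₁ ⊗ a₂ b`, `Σ a b₁ ⊗ b₂` and `λ a ⊗ b`, which are exactly the three terms of `Δ_A(ab)` given by
the weighted Leibniz rule.
-/

open TensorProduct

section MulTensorOne

variable {k A : Type*} [CommSemiring k] [Semiring A] [Algebra k A]

theorem map_mul'_comp_map_mk_flip_one (b : A) :
    map (LinearMap.mul' k A) (LinearMap.mul' k A) ∘ₗ
        map ((mk k A A).flip 1) ((mk k A A).flip b) =
      LinearMap.lTensor A (LinearMap.mulRight k b) :=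
  TensorProduct.ext' fun x y => by simp

theorem map_mul'_comp_map_mk_mk_one (a : A) :
    map (LinearMap.mul' k A) (LinearMap.mul' k A) ∘ₗ map (mk k A A a) (mk k A A 1) =
      LinearMap.rTensor A (LinearMap.mulLeft k a) :=
  TensorProduct.ext' fun x y => by simp

end MulTensorOne

theorem multiplication_is_coalgebra_morphism_general
    {k A : Type*} [CommRing k] [Ring A] [Algebra k A] (lam : k)
    (ΔA : A →ₗ[k] A ⊗[k] A)
    (hAcompat : ∀ a a' : A,
      ΔA (a * a') =
        LinearMap.rTensor A (LinearMap.mulLeft k a) (ΔA a') +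
        LinearMap.lTensor A (LinearMap.mulRight k a') (ΔA a) +
        lam • (a ⊗ₜ[k] a'))
    (Δ : A ⊗[k] A →ₗ[k] (A ⊗[k] A) ⊗[k] (A ⊗[k] A))
    (hΔ : ∀ (a b : A),
      Δ (a ⊗ₜ[k] b) =
        TensorProduct.map ((TensorProduct.mk k A A).flip 1)
          ((TensorProduct.mk k A A).flip b) (ΔA a) +
        TensorProduct.map (TensorProduct.mk k A A a) (TensorProduct.mk k A A 1) (ΔA b) +
        lam • ((a ⊗ₜ[k] (1 : A)) ⊗ₜ[k] ((1 : A) ⊗ₜ[k] b))) :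
    ∀ z : A ⊗[k] A,
      ΔA (LinearMap.mul' k A z) =
        TensorProduct.map (LinearMap.mul' k A) (LinearMap.mul' k A) (Δ z) := by
  suffices ΔA ∘ₗ LinearMap.mul' k A = map (LinearMap.mul' k A) (LinearMap.mul' k A) ∘ₗ Δ from
    fun z => LinearMap.congr_fun this z
  refine TensorProduct.ext' fun a b => ?_
  have hleft := LinearMap.congr_fun (map_mul'_comp_map_mk_flip_one (k := k) b) (ΔA a)
  have hright := LinearMap.congr_fun (map_mul'_comp_map_mk_mk_one (k := k) a) (ΔA b)
  simp only [LinearMap.coe_comp, Function.comp_apply] at hleft hright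
  simp only [LinearMap.comp_apply, LinearMap.mul'_apply, hAcompat, hΔ, map_add, map_smul,
    hleft, hright, map_tmul, mul_one, one_mul]
  abel

/-- For an infinitesimal unitary bialgebra `A` of weight `λ`, with the coproduct `Δ` on `A ⊗ A`
given by `Δ(a ⊗ b) = Σ (a₁ ⊗ 1) ⊗ (a₂ ⊗ b) + Σ (a ⊗ b₁) ⊗ (1 ⊗ b₂) + λ (a ⊗ 1) ⊗ (1 ⊗ b)`,
the multiplication `m : A ⊗ A → A` is a morphism of coalgebras: `Δ_A ∘ m = (m ⊗ m) ∘ Δ`. -/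
theorem multiplication_is_coalgebra_morphism
    {k A : Type*} [CommRing k] [Ring A] [Algebra k A] (lam : k)
    (ΔA : A →ₗ[k] A ⊗[k] A)
    (hAcoassoc : ∀ a : A,
      (TensorProduct.assoc k A A A) (LinearMap.rTensor A ΔA (ΔA a)) =
        LinearMap.lTensor A ΔA (ΔA a))
    (hAcompat : ∀ a a' : A,
      ΔA (a * a') =
        LinearMap.rTensor A (LinearMap.mulLeft k a) (ΔA a') +
        LinearMap.lTensor A (LinearMap.mulRight k a') (ΔA a) +
        lam • (a ⊗ₜ[k] a'))
    (Δ : A ⊗[k] A →ₗ[k] (A ⊗[k] A) ⊗[k] (A ⊗[k] A))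
    (hΔ : ∀ (a b : A),
      Δ (a ⊗ₜ[k] b) =
        TensorProduct.map ((TensorProduct.mk k A A).flip 1)
          ((TensorProduct.mk k A A).flip b) (ΔA a) +
        TensorProduct.map (TensorProduct.mk k A A a) (TensorProduct.mk k A A 1) (ΔA b) +
        lam • ((a ⊗ₜ[k] (1 : A)) ⊗ₜ[k] ((1 : A) ⊗ₜ[k] b))) :
    ∀ z : A ⊗[k] A,
      ΔA (LinearMap.mul' k A z) =
        TensorProduct.map (LinearMap.mul' k A) (LinearMap.mul' k A) (Δ z) :=
  multiplication_is_coalgebra_morphism_general lam ΔA hAcompat Δ hΔ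
end

section
/- Let (A, m, Δ) be an infinitesimal bialgebra of weight λ, and define a ⊳ b := Σ_{(b)} b_(1) a b_(2) (the image of Δ(b) under the linear map sending x ⊗ y to x a y). Then for all a, b, c ∈ A, writing (Δ ⊗ id)Δ(c) = Σ_{(c)} c_(1) ⊗ c_(2) ⊗ c_(3), one has (a ⊳ b) ⊳ c − a ⊳ (b ⊳ c) = − Σ_{(c)} c_(1) b c_(2) a c_(3) − Σ_{(c)} c_(1) a c_(2) b c_(3) − λ Σ_{(c)} (c_(1) a b c_(2) + c_(1) b a c_(2)). -/
/-!
Expanding `Δ (x * b * y)` twice with the compatibility rule, `a ⊳ (b ⊳ c)` becomes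
`Σ c₁ b c₂ a c₃` (from `Δ` hitting the right factor), `Σ c₁ a c₂ b c₃` (from `Δ` hitting the left
factor), `(a ⊳ b) ⊳ c` (from `Δ` hitting `b`) and the two weight terms. Coassociativity identifies
the first two sums with the two iterated coproduct sums of the statement, with `a` and `b`
exchanged.
-/

open TensorProduct

/-- The linear map `A ⊗ A → A` sending `x ⊗ y` to `x * a * y`. -/
noncomputable def sandwich (k : Type*) {A : Type*} [CommRing k] [NonUnitalRing A]
    [Module k A] [SMulCommClass k A A] [IsScalarTower k A A] (a : A) :
    A ⊗[k] A →ₗ[k] A :=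
  (LinearMap.mul' k A).comp (LinearMap.rTensor A (LinearMap.mulRight k a))

section Sandwich

variable {k A : Type*} [CommRing k] [NonUnitalRing A] [Module k A]
  [SMulCommClass k A A] [IsScalarTower k A A]

@[simp]
lemma sandwich_tmul (a x y : A) : sandwich k a (x ⊗ₜ[k] y) = x * a * y := by
  simp [sandwich]

lemma sandwich_rTensor_mulLeft (a u : A) (t : A ⊗[k] A) :
    sandwich k a (LinearMap.rTensor A (LinearMap.mulLeft k u) t) = u * sandwich k a t := by
  induction t using TensorProduct.induction_on with
  | zero => simp
  | tmul x y => simp [mul_assoc]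
  | add s t hs ht => simp [hs, ht, mul_add]

lemma sandwich_lTensor_mulRight (a u : A) (t : A ⊗[k] A) :
    sandwich k a (LinearMap.lTensor A (LinearMap.mulRight k u) t) = sandwich k a t * u := by
  induction t using TensorProduct.induction_on with
  | zero => simp
  | tmul x y => simp [mul_assoc]
  | add s t hs ht => simp [hs, ht, add_mul]

/-- Both sides send `(x ⊗ y) ⊗ z` to `x * b * y * a * z`. -/
lemma sandwich_rTensor_sandwich (a b : A) (u : (A ⊗[k] A) ⊗[k] A) :
    sandwich k a (LinearMap.rTensor A (sandwich k b) u) =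
      sandwich k b (LinearMap.lTensor A (sandwich k a) (TensorProduct.assoc k A A A u)) := by
  induction u using TensorProduct.induction_on with
  | zero => simp
  | tmul t z =>
    induction t using TensorProduct.induction_on with
    | zero => simp
    | tmul x y => simp [mul_assoc]
    | add s t hs ht => simp only [add_tmul, map_add, hs, ht]
  | add s t hs ht => simp [hs, ht]

lemma sandwich_comul_sandwich (lam : k) (Δ : A →ₗ[k] A ⊗[k] A)
    (hcompat : ∀ a b : A,
      Δ (a * b) =
        LinearMap.rTensor A (LinearMap.mulLeft k a) (Δ b) +
        LinearMap.lTensor A (LinearMap.mulRight k b) (Δ a) +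
        lam • (a ⊗ₜ[k] b))
    (a b : A) (s : A ⊗[k] A) :
    sandwich k a (Δ (sandwich k b s)) =
      sandwich k b (LinearMap.lTensor A (sandwich k a) (LinearMap.lTensor A Δ s)) +
      sandwich k b (LinearMap.rTensor A (sandwich k a) (LinearMap.rTensor A Δ s)) +
      sandwich k (sandwich k a (Δ b)) s +
      lam • (sandwich k (a * b) s + sandwich k (b * a) s) := by
  induction s using TensorProduct.induction_on with
  | zero => simp
  | tmul x y =>
    rw [sandwich_tmul, hcompat (x * b) y, hcompat x b]
    simp only [map_add, map_smul, sandwich_rTensor_mulLeft, sandwich_lTensor_mulRight,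
      sandwich_tmul, LinearMap.lTensor_tmul, LinearMap.rTensor_tmul, LinearMap.mulRight_apply,
      smul_add]
    noncomm_ring
  | add s t hs ht =>
    simp only [map_add, hs, ht, smul_add]
    abel

lemma sandwich_rTensor_comul_comul (Δ : A →ₗ[k] A ⊗[k] A)
    (hcoassoc : ∀ a : A,
      (TensorProduct.assoc k A A A) (LinearMap.rTensor A Δ (Δ a)) =
        LinearMap.lTensor A Δ (Δ a))
    (a b c : A) :
    sandwich k a (LinearMap.rTensor A (sandwich k b) (LinearMap.rTensor A Δ (Δ c))) =
      sandwich k b (LinearMap.lTensor A (sandwich k a) (LinearMap.lTensor A Δ (Δ c))) := by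
  rw [sandwich_rTensor_sandwich, hcoassoc]

end Sandwich

/-- In an infinitesimal bialgebra of weight `λ`, with `a ⊳ b := Σ b₁ a b₂`:
`(a ⊳ b) ⊳ c − a ⊳ (b ⊳ c)
  = − Σ c₁ b c₂ a c₃ − Σ c₁ a c₂ b c₃ − λ Σ (c₁ a b c₂ + c₁ b a c₂)`. -/
theorem pre_lie_associator_formula
    {k A : Type*} [CommRing k] [NonUnitalRing A] [Module k A]
    [SMulCommClass k A A] [IsScalarTower k A A] (lam : k)
    (Δ : A →ₗ[k] A ⊗[k] A)
    (hcoassoc : ∀ a : A,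
      (TensorProduct.assoc k A A A) (LinearMap.rTensor A Δ (Δ a)) =
        LinearMap.lTensor A Δ (Δ a))
    (hcompat : ∀ a b : A,
      Δ (a * b) =
        LinearMap.rTensor A (LinearMap.mulLeft k a) (Δ b) +
        LinearMap.lTensor A (LinearMap.mulRight k b) (Δ a) +
        lam • (a ⊗ₜ[k] b)) :
    ∀ a b c : A,
      sandwich k (sandwich k a (Δ b)) (Δ c) - sandwich k a (Δ (sandwich k b (Δ c))) =
        -(sandwich k a (LinearMap.rTensor A (sandwich k b) (LinearMap.rTensor A Δ (Δ c)))) -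
        sandwich k a (LinearMap.lTensor A (sandwich k b) (LinearMap.lTensor A Δ (Δ c))) -
        lam • (sandwich k (a * b) (Δ c) + sandwich k (b * a) (Δ c)) := by
  intro a b c
  rw [sandwich_comul_sandwich lam Δ hcompat a b (Δ c),
    sandwich_rTensor_comul_comul Δ hcoassoc a b,
    ← sandwich_rTensor_comul_comul Δ hcoassoc b a]
  abel
end
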